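/- arXiv:1808.02300 — 13 statements merged into one kernel-verified Lean document; each statement's English description precedes it below -/
import Mathlib

section
/- For every natural number n, ln((n+2)^2/((n+1)(n+3))) ≥ ln((n+2)/(n+1)) · ln((n+3)/(n+2)). -/
/-!
Truncating `log (1 + a⁻¹) = 2 ∑ₖ (2a + 1)^-(2k+1) / (2k + 1)` after its first term and bounding
the tail by a geometric series gives `log (1 + a⁻¹) ≤ 2 / (2a + 1) + 1 / (6a(a + 1)(2a + 1))`,
which bounds both factors of the product; the other side is bounded below by
`2x / (x + 2) ≤ log (1 + x)`. With `m = n + 2` the resulting comparison of rational functions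
reduces to `24 m⁴ - 50 m² + 1 ≥ 0`.
-/

open Real

theorem log_one_add_inv_le {a : ℝ} (ha : 0 < a) :
    log (1 + a⁻¹) ≤ 2 / (2 * a + 1) + 1 / (6 * a * (a + 1) * (2 * a + 1)) := by
  set r : ℝ := 1 / (2 * a + 1) with hr
  have hr1 : r ^ 2 < 1 := by
    rw [hr, div_pow, one_pow, div_lt_one (by positivity)]; nlinarith
  have hseries := (hasSum_nat_add_iff' 1).mpr (hasSum_log_one_add_inv ha)
  have hgeom := (hasSum_geometric_of_lt_one (sq_nonneg r) hr1).mul_left (2 / 3 * r ^ 3)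
  have htail : log (1 + a⁻¹) - 2 * r ≤ 2 / 3 * r ^ 3 * (1 - r ^ 2)⁻¹ := by
    refine (hasSum_le (fun k => ?_) hseries hgeom).trans_eq' (by simp [hr])
    have h3 : (1 : ℝ) / (2 * ↑(k + 1) + 1) ≤ 1 / 3 := by
      gcongr; push_cast; linarith [k.cast_nonneg (α := ℝ)]
    rw [show 2 * (k + 1) + 1 = 3 + 2 * k by ring, pow_add, pow_mul]
    have : 0 ≤ r ^ 3 * (r ^ 2) ^ k := by positivity
    nlinarith
  have hcalc : 2 * r + 2 / 3 * r ^ 3 * (1 - r ^ 2)⁻¹ =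
      2 / (2 * a + 1) + 1 / (6 * a * (a + 1) * (2 * a + 1)) := by
    have : 1 - r ^ 2 = 4 * a * (a + 1) / (2 * a + 1) ^ 2 := by
      rw [hr]; field_simp; ring
    rw [this, hr]; field_simp; ring
  linarith

theorem log_div_sub_one_mul_log_add_one_div_le {m : ℝ} (hm : 3 / 2 ≤ m) :
    log (m / (m - 1)) * log ((m + 1) / m) ≤ log (m ^ 2 / ((m - 1) * (m + 1))) := by
  have hm0 : 0 < m := by linarith
  have hm1 : 0 < m - 1 := by linarith
  have hm2 : 0 < 2 * m - 1 := by linarith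
  have hsq : 9 / 4 ≤ m ^ 2 := by nlinarith
  have hsq1 : 0 < m ^ 2 - 1 := by linarith
  have hsq2 : 0 < 2 * m ^ 2 - 1 := by linarith
  rw [show m / (m - 1) = 1 + (m - 1)⁻¹ by field_simp; ring,
    show (m + 1) / m = 1 + m⁻¹ by field_simp,
    show m ^ 2 / ((m - 1) * (m + 1)) = 1 + (m ^ 2 - 1)⁻¹ by field_simp; ring]
  have hA :
      log (1 + (m - 1)⁻¹) ≤ (12 * m ^ 2 - 12 * m + 1) / (6 * (m - 1) * m * (2 * m - 1)) := by
    convert log_one_add_inv_le hm1 using 1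
    rw [show 2 * (m - 1) + 1 = 2 * m - 1 by ring]; field_simp; ring
  have hB : log (1 + m⁻¹) ≤ (12 * m ^ 2 + 12 * m + 1) / (6 * m * (m + 1) * (2 * m + 1)) := by
    convert log_one_add_inv_le hm0 using 1; field_simp; ring
  have hC : 2 / (2 * m ^ 2 - 1) ≤ log (1 + (m ^ 2 - 1)⁻¹) := by
    convert le_log_one_add_of_nonneg (inv_nonneg.mpr hsq1.le) using 1; field_simp; ring
  calc log (1 + (m - 1)⁻¹) * log (1 + m⁻¹)
      ≤ (12 * m ^ 2 - 12 * m + 1) / (6 * (m - 1) * m * (2 * m - 1)) *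
        ((12 * m ^ 2 + 12 * m + 1) / (6 * m * (m + 1) * (2 * m + 1))) :=
        mul_le_mul hA hB (log_nonneg (by simp [hm0.le]))
          ((log_nonneg (by simp [hm1.le])).trans hA)
    _ ≤ 2 / (2 * m ^ 2 - 1) := by
        rw [div_mul_div_comm, div_le_div_iff₀ (by positivity) hsq2]
        nlinarith [mul_nonneg (sq_nonneg m) (show 0 ≤ 24 * m ^ 2 - 54 by linarith)]
    _ ≤ _ := hC

theorem stmt_0 (n : ℕ) :
    Real.log (((n:ℝ)+2)^2 / (((n:ℝ)+1)*((n:ℝ)+3))) ≥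
      Real.log (((n:ℝ)+2)/((n:ℝ)+1)) * Real.log (((n:ℝ)+3)/((n:ℝ)+2)) := by
  have h := log_div_sub_one_mul_log_add_one_div_le (m := (n : ℝ) + 2)
    (by linarith [n.cast_nonneg (α := ℝ)])
  convert h using 4 <;> ring
end

section
/- For every natural number n, ln((n+2)^2/((n+1)(n+3))) ≤ (ln((n+2)/(n+1)))^2. -/
/-!
Write `a = n + 1`. Since `log (1 + t) ≤ t`, the left side is at most `1 / (a (a + 2))`, while
`log (1 + t) ≥ 2t / (t + 2)` bounds `log ((a + 1) / a)` below by `2 / (2a + 1)`. The claim then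
reduces to `(a + 1/2)² ≤ a (a + 2)`, which holds for `a ≥ 1/4`.
-/

open Real

lemma Real.log_sq_succ_div_le {a : ℝ} (ha : 0 < a) :
    log ((a + 1) ^ 2 / (a * (a + 2))) ≤ 1 / (a * (a + 2)) := by
  have hform : (a + 1) ^ 2 / (a * (a + 2)) = 1 / (a * (a + 2)) + 1 := by
    field_simp
    ring
  rw [hform]
  exact log_le_sub_one_of_pos (by positivity) |>.trans_eq (add_sub_cancel_right _ _)

lemma Real.two_div_le_log_succ_div {a : ℝ} (ha : 0 < a) :
    2 / (2 * a + 1) ≤ log ((a + 1) / a) := by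
  have h := le_log_one_add_of_nonneg (inv_pos.2 ha).le
  rwa [show 1 + a⁻¹ = (a + 1) / a by field_simp,
    show 2 * a⁻¹ / (a⁻¹ + 2) = 2 / (2 * a + 1) by field_simp; ring] at h

lemma Real.log_sq_succ_div_le_log_succ_div_sq {a : ℝ} (ha : 1 / 4 ≤ a) :
    log ((a + 1) ^ 2 / (a * (a + 2))) ≤ log ((a + 1) / a) ^ 2 := by
  have ha0 : 0 < a := by linarith
  calc log ((a + 1) ^ 2 / (a * (a + 2)))
      ≤ 1 / (a * (a + 2)) := log_sq_succ_div_le ha0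
    _ ≤ (2 / (2 * a + 1)) ^ 2 := by
        rw [div_pow, div_le_div_iff₀ (by positivity) (by positivity)]
        nlinarith
    _ ≤ log ((a + 1) / a) ^ 2 := by
        gcongr
        exact two_div_le_log_succ_div ha0

theorem stmt_1 (n : ℕ) :
    Real.log (((n:ℝ)+2)^2 / (((n:ℝ)+1)*((n:ℝ)+3))) ≤
      (Real.log (((n:ℝ)+2)/((n:ℝ)+1)))^2 := by
  have ha : (1 : ℝ) / 4 ≤ n + 1 := by linarith [n.cast_nonneg (α := ℝ)]
  convert log_sq_succ_div_le_log_succ_div_sq ha using 3 <;> ring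
end

section
/- Define p_N(x) = Σ_{k=1}^{N} (-1)^{k+1} x^k / k. For all natural numbers n ≥ 1, p_3(1/((n+1)(n+3))) ≤ (p_2(1/(n+1)))^2. -/
/-!
With `a = n + 1 ≥ 2`, the two arguments are `1 / (a (a + 2))` and `1 / a`. Clearing denominators,
the gap between the two sides is `(12a⁴ + 33a³ - 18a² - 64a + 24) / (12 a⁴ (a + 2)³)`, and the
quartic numerator is nonnegative once `a ≥ 2`.
-/

open Finset

lemma sum_Icc_one_two_alternating (x : ℝ) :
    ∑ k ∈ Icc (1 : ℕ) 2, (-1 : ℝ) ^ (k + 1) * x ^ k / k = x - x ^ 2 / 2 := by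
  rw [show Icc 1 2 = ({1, 2} : Finset ℕ) by decide]
  norm_num
  ring

lemma sum_Icc_one_three_alternating (x : ℝ) :
    ∑ k ∈ Icc (1 : ℕ) 3, (-1 : ℝ) ^ (k + 1) * x ^ k / k = x - x ^ 2 / 2 + x ^ 3 / 3 := by
  rw [show Icc 1 3 = ({1, 2, 3} : Finset ℕ) by decide]
  norm_num
  ring

lemma quartic_nonneg {a : ℝ} (ha : 2 ≤ a) : 0 ≤ 12 * a ^ 4 + 33 * a ^ 3 - 18 * a ^ 2 - 64 * a + 24 := by
  nlinarith [mul_le_mul_of_nonneg_left ha (by positivity : (0 : ℝ) ≤ a ^ 3),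
    mul_le_mul_of_nonneg_left ha (by positivity : (0 : ℝ) ≤ a ^ 2),
    mul_le_mul_of_nonneg_left ha (by positivity : (0 : ℝ) ≤ a)]

lemma log_taylor_three_le_sq_log_taylor_two {a : ℝ} (ha : 2 ≤ a) :
    let x := 1 / (a * (a + 2))
    let y := 1 / a
    x - x ^ 2 / 2 + x ^ 3 / 3 ≤ (y - y ^ 2 / 2) ^ 2 := by
  intro x y
  have gap : (y - y ^ 2 / 2) ^ 2 - (x - x ^ 2 / 2 + x ^ 3 / 3)
      = (12 * a ^ 4 + 33 * a ^ 3 - 18 * a ^ 2 - 64 * a + 24) / (12 * a ^ 4 * (a + 2) ^ 3) := by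
    have : a ≠ 0 := by positivity
    have : a + 2 ≠ 0 := by positivity
    simp only [x, y]
    field_simp
    ring
  rw [← sub_nonneg, gap]
  exact div_nonneg (quartic_nonneg ha) (by positivity)

theorem stmt_5 (p : ℕ → ℝ → ℝ)
    (hp : ∀ N x, p N x = ∑ k ∈ Finset.Icc 1 N, (-1)^(k+1) * x^k / k)
    (n : ℕ) (hn : 1 ≤ n) :
    p 3 (1/(((n:ℝ)+1)*((n:ℝ)+3))) ≤ (p 2 (1/((n:ℝ)+1)))^2 := by
  have ha : (2 : ℝ) ≤ n + 1 := by
    have : (1 : ℝ) ≤ n := by exact_mod_cast hn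
    linarith
  have hb : (n : ℝ) + 3 = (n + 1) + 2 := by ring
  rw [hp, hp, sum_Icc_one_three_alternating, sum_Icc_one_two_alternating, hb]
  exact log_taylor_three_le_sq_log_taylor_two ha
end

section
/- For every natural number n, sin(1/((n+2)(n+3))) ≥ sin(1/(n+2)) · sin(1/(n+3)). -/
/-! With `a = 1/(n+2)` and `b = 1/(n+3)`, concavity of `sin` on `[0, π]` together with
`sin 0 = 0` gives `sin (a * b) ≥ b * sin a`, and `sin b ≤ b` finishes. -/

open Real

theorem Real.mul_sin_le_sin_mul {t x : ℝ} (ht₀ : 0 ≤ t) (ht₁ : t ≤ 1) (hx₀ : 0 ≤ x)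
    (hxπ : x ≤ π) : t * sin x ≤ sin (t * x) := by
  simpa using strictConcaveOn_sin_Icc.concaveOn.2 (Set.left_mem_Icc.2 pi_pos.le) ⟨hx₀, hxπ⟩
    (sub_nonneg.2 ht₁) ht₀ (sub_add_cancel 1 t)

theorem Real.sin_mul_sin_le_sin_mul {x t : ℝ} (hx₀ : 0 ≤ x) (hxπ : x ≤ π) (ht₀ : 0 ≤ t)
    (ht₁ : t ≤ 1) : sin x * sin t ≤ sin (x * t) :=
  calc sin x * sin t ≤ sin x * t :=
        mul_le_mul_of_nonneg_left (sin_le ht₀) (sin_nonneg_of_nonneg_of_le_pi hx₀ hxπ)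
    _ = t * sin x := mul_comm _ _
    _ ≤ sin (t * x) := mul_sin_le_sin_mul ht₀ ht₁ hx₀ hxπ
    _ = sin (x * t) := by rw [mul_comm]

theorem stmt_6 (n : ℕ) :
    Real.sin (1/(((n:ℝ)+2)*((n:ℝ)+3))) ≥
      Real.sin (1/((n:ℝ)+2)) * Real.sin (1/((n:ℝ)+3)) := by
  have hn : (0 : ℝ) ≤ n := n.cast_nonneg
  have h₂ : 1 / ((n : ℝ) + 2) ≤ 1 := by rw [div_le_one₀] <;> linarith
  have h₃ : 1 / ((n : ℝ) + 3) ≤ 1 := by rw [div_le_one₀] <;> linarith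
  rw [← one_div_mul_one_div]
  exact sin_mul_sin_le_sin_mul (by positivity) (h₂.trans (by linarith [pi_gt_three]))
    (by positivity) h₃
end

section
/- For every natural number n, sin(1/((n+2)(n+3))) · cos(1/(n+2)) ≤ (sin(1/(n+2)))^2 · cos(1/(n+3)). -/
/-!
With `a = 1/x` and `b = 1/(x+1)` we have `1/(x(x+1)) = ab`. Then `sin (ab) ≤ ab`,
`0 < cos a ≤ cos b` because `0 < b < a ≤ 1 < π/2`, and `ab = a²/(1+a) ≤ sin² a`
by the cubic Taylor bound for the sine.
-/

open Real

/-- Since `sin a > a - a³/6`, this reduces to `(1 - a²/6)² (1 + a) ≥ 1`. -/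
theorem sq_div_one_add_le_sin_sq {a : ℝ} (ha : 0 < a) (ha1 : a ≤ 1) :
    a ^ 2 / (1 + a) ≤ sin a ^ 2 := by
  have hsin : a - a ^ 3 / 6 < sin a := sin_gt_sub_cube ha
  have htaylor_pos : 0 < a - a ^ 3 / 6 := by nlinarith [pow_pos ha 2]
  calc a ^ 2 / (1 + a) ≤ (a - a ^ 3 / 6) ^ 2 := by
        rw [div_le_iff₀ (by linarith)]
        nlinarith [pow_pos ha 2, pow_pos ha 3, pow_pos ha 4, mul_pos ha (pow_pos ha 4)]
    _ ≤ sin a ^ 2 := pow_le_pow_left₀ htaylor_pos.le hsin.le 2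

theorem sin_inv_mul_cos_inv_le {x : ℝ} (hx : 1 ≤ x) :
    sin (1 / (x * (x + 1))) * cos (1 / x) ≤ sin (1 / x) ^ 2 * cos (1 / (x + 1)) := by
  have hx0 : 0 < x := by linarith
  have hcos_pos : ∀ t : ℝ, 0 ≤ t → t ≤ 1 → 0 < cos t := fun t ht0 ht1 =>
    cos_pos_of_mem_Ioo ⟨by linarith [pi_gt_three], by linarith [pi_gt_three]⟩
  have hinv_le : 1 / x ≤ 1 := by rw [div_le_one hx0]; exact hx
  have hsucc_le : 1 / (x + 1) ≤ 1 / x := one_div_le_one_div_of_le hx0 (by linarith)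
  have hsin_le : sin (1 / (x * (x + 1))) ≤ 1 / (x * (x + 1)) := sin_le (by positivity)
  have hcos_le : cos (1 / x) ≤ cos (1 / (x + 1)) :=
    cos_le_cos_of_nonneg_of_le_pi (by positivity) (by linarith [pi_gt_three]) hsucc_le
  have hsq : 1 / (x * (x + 1)) ≤ sin (1 / x) ^ 2 := by
    have h := sq_div_one_add_le_sin_sq (one_div_pos.mpr hx0) hinv_le
    convert h using 1
    field_simp
  calc sin (1 / (x * (x + 1))) * cos (1 / x) ≤ 1 / (x * (x + 1)) * cos (1 / (x + 1)) :=
        mul_le_mul hsin_le hcos_le (hcos_pos _ (by positivity) hinv_le).le (by positivity)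
    _ ≤ sin (1 / x) ^ 2 * cos (1 / (x + 1)) :=
        mul_le_mul_of_nonneg_right hsq (hcos_pos _ (by positivity) (hsucc_le.trans hinv_le)).le

theorem stmt_7 (n : ℕ) :
    Real.sin (1/(((n:ℝ)+2)*((n:ℝ)+3))) * Real.cos (1/((n:ℝ)+2)) ≤
      (Real.sin (1/((n:ℝ)+2)))^2 * Real.cos (1/((n:ℝ)+3)) := by
  have h := sin_inv_mul_cos_inv_le (x := (n : ℝ) + 2) (by linarith [n.cast_nonneg (α := ℝ)])
  rwa [show (n : ℝ) + 2 + 1 = n + 3 by ring] at h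
end

section
/- Let a_n = tan(1/(n+2)) for n ≥ 0. Then for every n, a_n(1 - a_n) ≤ a_{n+1} ≤ a_n/(1 + a_n). -/
/-!
Put `x = 1/(n+2)` and `y = 1/(n+3)`, so that `x - y = x * y`. Writing `tan x - tan y` as
`sin (x - y) / (cos x * cos y) = sin (x * y) / (cos x * cos y)`, the two inequalities become
`tan x * tan y ≤ tan x - tan y ≤ (tan x) ^ 2`, that is
`sin x * sin y ≤ sin (x * y)` (from `sin y ≤ y` and concavity of `sin` on `[0, π]`) and
`sin (x * y) * cos x ≤ sin x ^ 2 * cos y` (from `sin (x * y) ≤ x * y ≤ sin x ^ 2` and `cos x ≤ cos y`).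
-/

open Real

namespace Real

lemma mul_sin_le_sin_mul_s8 {a x : ℝ} (ha₀ : 0 ≤ a) (ha₁ : a ≤ 1) (hx₀ : 0 ≤ x) (hx : x ≤ π) :
    a * sin x ≤ sin (a * x) := by
  simpa using strictConcaveOn_sin_Icc.concaveOn.2 (x := x) (y := 0) ⟨hx₀, hx⟩
    ⟨le_rfl, pi_pos.le⟩ ha₀ (sub_nonneg.2 ha₁) (add_sub_cancel a 1)

lemma sin_mul_sin_le_sin_mul_s8 {x y : ℝ} (hx₀ : 0 ≤ x) (hx : x ≤ π) (hy₀ : 0 ≤ y) (hy : y ≤ 1) :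
    sin x * sin y ≤ sin (x * y) :=
  calc sin x * sin y ≤ sin x * y :=
        mul_le_mul_of_nonneg_left (sin_le hy₀) (sin_nonneg_of_nonneg_of_le_pi hx₀ hx)
    _ ≤ sin (x * y) := by rw [mul_comm, mul_comm x]; exact mul_sin_le_sin_mul_s8 hy₀ hy hx₀ hx

lemma mul_le_sin_sq_of_sub_eq_mul {x y : ℝ} (hx₀ : 0 < x) (hx : x ≤ 1) (hxy : x - y = x * y) :
    x * y ≤ sin x ^ 2 := by
  have hsin : x * (1 - x ^ 2 / 6) ≤ sin x := by linarith [sin_gt_sub_cube hx₀]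
  have hsq : x ^ 2 * (1 - x ^ 2 / 6) ^ 2 ≤ sin x ^ 2 := by
    rw [← mul_pow]; exact pow_le_pow_left₀ (by nlinarith) hsin 2
  have hprod : x * y * (1 + x) = x ^ 2 := by linear_combination (-x) * hxy
  have hcubic : x * y ≤ x ^ 2 * (1 - x ^ 2 / 3) := by
    refine le_of_mul_le_mul_right ?_ (by linarith : 0 < 1 + x)
    rw [hprod]
    have hfactor : 0 ≤ 1 - x / 3 - x ^ 2 / 3 := by nlinarith
    nlinarith [mul_nonneg (pow_pos hx₀ 3).le hfactor]
  nlinarith [sq_nonneg (x ^ 2)]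

lemma tan_sub_tan {x y : ℝ} (hx : cos x ≠ 0) (hy : cos y ≠ 0) :
    tan x - tan y = sin (x - y) / (cos x * cos y) := by
  rw [tan_eq_sin_div_cos, tan_eq_sin_div_cos, sin_sub]
  field_simp

end Real

section SubEqMul

variable {x y : ℝ}

lemma pos_and_lt_of_sub_eq_mul (hx₀ : 0 < x) (hxy : x - y = x * y) : 0 < y ∧ y < x := by
  have hy : y = x / (1 + x) := by
    rw [eq_div_iff (by positivity)]; linarith
  have hy₀ : 0 < y := hy ▸ by positivity
  exact ⟨hy₀, by nlinarith⟩

lemma cos_pos_of_pos_of_le_one (hx₀ : 0 < x) (hx : x ≤ 1) : 0 < cos x :=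
  cos_pos_of_mem_Ioo ⟨by linarith [pi_pos], by linarith [pi_gt_three]⟩

lemma tan_mul_tan_le_tan_sub_tan_of_sub_eq_mul (hx₀ : 0 < x) (hx : x ≤ 1) (hxy : x - y = x * y) :
    tan x * tan y ≤ tan x - tan y := by
  obtain ⟨hy₀, hyx⟩ := pos_and_lt_of_sub_eq_mul hx₀ hxy
  have hcx := cos_pos_of_pos_of_le_one hx₀ hx
  have hcy := cos_pos_of_pos_of_le_one hy₀ (by linarith)
  rw [tan_sub_tan hcx.ne' hcy.ne', hxy, tan_eq_sin_div_cos, tan_eq_sin_div_cos, div_mul_div_comm]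
  exact div_le_div_of_nonneg_right
    (sin_mul_sin_le_sin_mul_s8 hx₀.le (by linarith [pi_gt_three]) hy₀.le (by linarith))
    (by positivity)

lemma tan_sub_tan_le_tan_sq_of_sub_eq_mul (hx₀ : 0 < x) (hx : x ≤ 1) (hxy : x - y = x * y) :
    tan x - tan y ≤ tan x ^ 2 := by
  obtain ⟨hy₀, hyx⟩ := pos_and_lt_of_sub_eq_mul hx₀ hxy
  have hcx := cos_pos_of_pos_of_le_one hx₀ hx
  have hcy := cos_pos_of_pos_of_le_one hy₀ (by linarith)
  have hsin : sin (x * y) ≤ sin x ^ 2 :=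
    (sin_le (by positivity)).trans (mul_le_sin_sq_of_sub_eq_mul hx₀ hx hxy)
  have hcos : cos x ≤ cos y :=
    cos_le_cos_of_nonneg_of_le_pi hy₀.le (by linarith [pi_gt_three]) hyx.le
  have key : sin (x * y) * cos x ≤ sin x ^ 2 * cos y :=
    mul_le_mul hsin hcos hcx.le (sq_nonneg _)
  rw [tan_sub_tan hcx.ne' hcy.ne', hxy, tan_eq_sin_div_cos, div_pow,
    div_le_div_iff₀ (by positivity) (by positivity)]
  nlinarith

theorem tan_mul_one_sub_tan_le_tan_and_tan_le_tan_div_one_add_tan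
    (hx₀ : 0 < x) (hx : x ≤ 1) (hxy : x - y = x * y) :
    tan x * (1 - tan x) ≤ tan y ∧ tan y ≤ tan x / (1 + tan x) := by
  have htx : 0 < tan x := tan_pos_of_pos_of_lt_pi_div_two hx₀ (by linarith [pi_gt_three])
  have hlower := tan_sub_tan_le_tan_sq_of_sub_eq_mul hx₀ hx hxy
  have hupper := tan_mul_tan_le_tan_sub_tan_of_sub_eq_mul hx₀ hx hxy
  refine ⟨by nlinarith, ?_⟩
  rw [le_div_iff₀ (by positivity)]
  nlinarith

end SubEqMul

theorem stmt_8 (a : ℕ → ℝ) (ha : ∀ n, a n = Real.tan (1/((n:ℝ)+2))) :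
    ∀ n : ℕ, a n * (1 - a n) ≤ a (n+1) ∧ a (n+1) ≤ a n / (1 + a n) := by
  intro n
  have hn : (0 : ℝ) ≤ n := n.cast_nonneg
  rw [ha n, ha (n + 1), Nat.cast_succ]
  apply tan_mul_one_sub_tan_le_tan_and_tan_le_tan_div_one_add_tan (by positivity)
  · rw [div_le_one (by positivity)]; linarith
  · field_simp; ring
end

section
/- Define r_N(x) = Σ_{k=0}^{N} (-1)^k x^{2k+1}/(2k+1)!. For all natural numbers n, r_1(1/((n+2)(n+3))) ≥ r_2(1/(n+2)) · r_2(1/(n+3)). -/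
/-! Writing `x = 1/(n+2)` and `y = 1/(n+3)`, the argument of `r_1` is `x * y`, and for
`x, y ∈ [0, 1]` the difference `r_1(xy) - r_2(x) r_2(y)` equals `xy` times a polynomial whose
leading part `(x² + y²)/6` dominates all remaining terms. -/

open Finset

noncomputable def sinTaylor (N : ℕ) (x : ℝ) : ℝ :=
  ∑ k ∈ range (N + 1), (-1) ^ k * x ^ (2 * k + 1) / ((2 * k + 1).factorial : ℝ)

lemma sinTaylor_one (x : ℝ) : sinTaylor 1 x = x - x ^ 3 / 6 := by
  simp [sinTaylor, sum_range_succ, Nat.factorial]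
  ring

lemma sinTaylor_two (x : ℝ) : sinTaylor 2 x = x - x ^ 3 / 6 + x ^ 5 / 120 := by
  simp [sinTaylor, sum_range_succ, Nat.factorial]
  ring

lemma sinTaylor_two_mul_le_sinTaylor_one_mul {x y : ℝ} (hx₀ : 0 ≤ x) (hx₁ : x ≤ 1)
    (hy₀ : 0 ≤ y) (hy₁ : y ≤ 1) :
    sinTaylor 2 x * sinTaylor 2 y ≤ sinTaylor 1 (x * y) := by
  rw [sinTaylor_one, sinTaylor_two, sinTaylor_two]
  have hxy₀ : 0 ≤ x * y := mul_nonneg hx₀ hy₀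
  have hxy₁ : x * y ≤ 1 := mul_le_one₀ hx₁ hy₀ hy₁
  have hx4 : x ^ 4 ≤ x ^ 2 := pow_le_pow_of_le_one hx₀ hx₁ (by norm_num)
  have hy4 : y ^ 4 ≤ y ^ 2 := pow_le_pow_of_le_one hy₀ hy₁ (by norm_num)
  have hxy4 : (x * y) ^ 4 ≤ (x * y) ^ 2 := pow_le_pow_of_le_one hxy₀ hxy₁ (by norm_num)
  have hx2y2 : x ^ 2 * y ^ 2 ≤ x ^ 2 :=
    mul_le_of_le_one_right (sq_nonneg x) (pow_le_one₀ hy₀ hy₁)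
  have hy2x2 : x ^ 2 * y ^ 2 ≤ y ^ 2 :=
    mul_le_of_le_one_left (sq_nonneg y) (pow_le_one₀ hx₀ hx₁)
  have hQ : 0 ≤ (x ^ 2 + y ^ 2) / 6 - 7 * x ^ 2 * y ^ 2 / 36 - (x ^ 4 + y ^ 4) / 120
      + x ^ 2 * y ^ 2 * (x ^ 2 + y ^ 2) / 720 - x ^ 4 * y ^ 4 / 14400 := by
    have : 0 ≤ x ^ 2 * y ^ 2 * (x ^ 2 + y ^ 2) := by positivity
    linarith [sq_nonneg x, sq_nonneg y]
  linarith [mul_nonneg hxy₀ hQ]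

theorem stmt_9 (r : ℕ → ℝ → ℝ)
    (hr : ∀ N x, r N x = ∑ k ∈ Finset.range (N+1), (-1)^k * x^(2*k+1) / (Nat.factorial (2*k+1) : ℝ))
    (n : ℕ) :
    r 1 (1/(((n:ℝ)+2)*((n:ℝ)+3))) ≥ r 2 (1/((n:ℝ)+2)) * r 2 (1/((n:ℝ)+3)) := by
  obtain rfl : r = sinTaylor := funext fun N => funext (hr N)
  rw [← one_div_mul_one_div]
  have hn : (0 : ℝ) ≤ n := n.cast_nonneg
  exact sinTaylor_two_mul_le_sinTaylor_one_mul (by positivity)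
    (div_le_one_of_le₀ (by linarith) (by positivity)) (by positivity)
    (div_le_one_of_le₀ (by linarith) (by positivity))
end

section
/- For every natural number n, 2·cosh((2n+5)/(2(n+2)(n+3)))·sinh(1/(2(n+2)(n+3))) ≥ sinh(1/(n+2))·sinh(1/(n+3)). -/
/-!
Put `a = 1/(n+2)` and `b = 1/(n+3)`. The two arguments on the left are `(a+b)/2` and `(a-b)/2`,
so by the sum-to-product formula the left side is `sinh a - sinh b`, while `a - b = ab`.
With `sinh x ≤ x + x³/5` on `[0, 1]`, `cosh y ≥ 1 + y²/2` and `sinh y ≥ y`, the claim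
`sinh a sinh b ≤ sinh a - sinh b` reduces to `(1 + a²/5)(1 + b²/5) ≤ 1 + (a+b)²/8`, which holds
because `b ≤ a ≤ 2b` and `a ≤ 1`.
-/

open Real

namespace Real

theorem sinh_sub_sinh (x y : ℝ) :
    sinh x - sinh y = 2 * cosh ((x + y) / 2) * sinh ((x - y) / 2) := by
  obtain ⟨u, v, rfl, rfl⟩ : ∃ u v : ℝ, x = u + v ∧ y = u - v :=
    ⟨(x + y) / 2, (x - y) / 2, by ring, by ring⟩
  rw [sinh_add, sinh_sub, show (u + v + (u - v)) / 2 = u by ring,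
    show (u + v - (u - v)) / 2 = v by ring]
  ring

theorem one_add_sq_div_two_le_cosh (x : ℝ) : 1 + x ^ 2 / 2 ≤ cosh x := by
  have hsq : (x / 2) ^ 2 ≤ sinh (x / 2) ^ 2 := by
    refine sq_le_sq.2 ?_
    rw [abs_sinh]
    exact self_le_sinh_iff.2 (abs_nonneg _)
  calc 1 + x ^ 2 / 2 ≤ 1 + 2 * sinh (x / 2) ^ 2 := by linarith
    _ = cosh (2 * (x / 2)) := by rw [cosh_two_mul, cosh_sq]; ring
    _ = cosh x := by rw [mul_div_cancel₀ x two_ne_zero]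

theorem sinh_le_self_add_cube_div_five {x : ℝ} (hx₀ : 0 ≤ x) (hx₁ : x ≤ 1) :
    sinh x ≤ x + x ^ 3 / 5 := by
  have habs : |x| = x := abs_of_nonneg hx₀
  -- the degree-5 Taylor remainder of `exp` on `[-1, 1]` is at most `|x|⁵/100`
  have hpos := exp_bound (x := x) (by rwa [habs]) (n := 5) (by norm_num)
  have hneg := exp_bound (x := -x) (by rwa [abs_neg, habs]) (n := 5) (by norm_num)
  norm_num [Finset.sum_range_succ, Nat.factorial, habs] at hpos hneg
  rw [show (-x) ^ 3 = -x ^ 3 by ring] at hneg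
  have hx5 : x ^ 5 ≤ x ^ 3 := pow_le_pow_of_le_one hx₀ hx₁ (by norm_num)
  rw [sinh_eq]
  linarith [(abs_le.1 hpos).2, (abs_le.1 hneg).1, pow_nonneg hx₀ 3]

end Real

theorem sinh_mul_sinh_le_sinh_sub_sinh {a b : ℝ} (ha₀ : 0 ≤ a) (ha₁ : a ≤ 1)
    (hab : a - b = a * b) : sinh a * sinh b ≤ sinh a - sinh b := by
  have hb₀ : 0 ≤ b := by nlinarith
  have hba : b ≤ a := by nlinarith
  have hab₂ : a ≤ 2 * b := by nlinarith
  have hquad : (1 + a ^ 2 / 5) * (1 + b ^ 2 / 5) ≤ 1 + (a + b) ^ 2 / 8 := by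
    nlinarith [mul_nonneg (sub_nonneg.2 hba) (sub_nonneg.2 hab₂), mul_nonneg ha₀ hb₀,
      mul_nonneg (sq_nonneg b) (sub_nonneg.2 (pow_le_one₀ ha₀ ha₁ : a ^ 2 ≤ 1))]
  calc sinh a * sinh b ≤ (a + a ^ 3 / 5) * (b + b ^ 3 / 5) :=
        mul_le_mul (sinh_le_self_add_cube_div_five ha₀ ha₁)
          (sinh_le_self_add_cube_div_five hb₀ (hba.trans ha₁)) (sinh_nonneg_iff.2 hb₀)
          (by positivity)
    _ = a * b * ((1 + a ^ 2 / 5) * (1 + b ^ 2 / 5)) := by ring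
    _ ≤ a * b * (1 + (a + b) ^ 2 / 8) := by gcongr
    _ = (a - b) * (1 + ((a + b) / 2) ^ 2 / 2) := by rw [hab]; ring
    _ ≤ 2 * cosh ((a + b) / 2) * sinh ((a - b) / 2) := by
        have hcosh := one_add_sq_div_two_le_cosh ((a + b) / 2)
        have hsinh : (a - b) / 2 ≤ sinh ((a - b) / 2) := self_le_sinh_iff.2 (by linarith)
        nlinarith
    _ = sinh a - sinh b := (sinh_sub_sinh a b).symm

theorem stmt_11 (n : ℕ) :
    2 * Real.cosh ((2*(n:ℝ)+5)/(2*((n:ℝ)+2)*((n:ℝ)+3))) *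
        Real.sinh (1/(2*((n:ℝ)+2)*((n:ℝ)+3))) ≥
      Real.sinh (1/((n:ℝ)+2)) * Real.sinh (1/((n:ℝ)+3)) := by
  have h₂ : (n : ℝ) + 2 ≠ 0 := by positivity
  have h₃ : (n : ℝ) + 3 ≠ 0 := by positivity
  have hmid : (2 * (n : ℝ) + 5) / (2 * ((n : ℝ) + 2) * ((n : ℝ) + 3)) =
      (1 / ((n : ℝ) + 2) + 1 / ((n : ℝ) + 3)) / 2 := by
    field_simp; ring
  have hhalf : 1 / (2 * ((n : ℝ) + 2) * ((n : ℝ) + 3)) =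
      (1 / ((n : ℝ) + 2) - 1 / ((n : ℝ) + 3)) / 2 := by
    field_simp; ring
  rw [hmid, hhalf, ← sinh_sub_sinh]
  refine sinh_mul_sinh_le_sinh_sub_sinh (by positivity) ?_ ?_
  · rw [div_le_one (by positivity)]
    linarith [(n.cast_nonneg : (0 : ℝ) ≤ n)]
  · field_simp; ring
end

section
/- For every natural number n, 2·cosh((2n+5)/(2(n+2)(n+3)))·sinh(1/(2(n+2)(n+3))) ≤ (sinh(1/(n+2)))^2. -/
/-!
By the product-to-sum formula the left side is `sinh a - sinh b` with `a = 1/(n+2)` and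
`b = 1/(n+3) = a/(1+a)`. The Taylor bound `sinh a ≤ a + a³/5` (valid for `a ≤ 1/2`) and
`b ≤ sinh b`, `a ≤ sinh a` reduce the claim to `a + a³/5 - a/(1+a) ≤ a²`, which is
`a³(4 - a) ≥ 0`.
-/

open Real

namespace Real

lemma two_mul_cosh_mul_sinh (x y : ℝ) : 2 * cosh x * sinh y = sinh (x + y) - sinh (x - y) := by
  rw [sinh_add, sinh_sub]; ring

lemma abs_exp_sub_cubic_le {x : ℝ} (hx : |x| ≤ 1) :
    |exp x - (1 + x + x ^ 2 / 2 + x ^ 3 / 6)| ≤ 5 / 96 * x ^ 4 := by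
  have h := exp_bound hx (n := 4) (by norm_num)
  norm_num [Finset.sum_range_succ, Nat.factorial, Even.pow_abs (by decide : Even 4)] at h
  linarith

lemma sinh_le_add_cube_div_five {x : ℝ} (hx₀ : 0 ≤ x) (hx : x ≤ 1 / 2) :
    sinh x ≤ x + x ^ 3 / 5 := by
  have habs : |x| ≤ 1 := by rw [abs_of_nonneg hx₀]; linarith
  have hpos := (abs_le.1 (abs_exp_sub_cubic_le habs)).2
  have hneg := (abs_le.1 (abs_exp_sub_cubic_le (x := -x) (by rwa [abs_neg]))).1
  have hx4 : x ^ 4 ≤ x ^ 3 / 2 := by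
    nlinarith [pow_nonneg hx₀ 3]
  -- the quartic error term is absorbed since `1/6 + (5/96)·(1/2) < 1/5`
  rw [sinh_eq]
  nlinarith [pow_nonneg hx₀ 3]

lemma sinh_sub_sinh_div_one_add_le_sinh_sq {a : ℝ} (ha₀ : 0 ≤ a) (ha : a ≤ 1 / 2) :
    sinh a - sinh (a / (1 + a)) ≤ sinh a ^ 2 := by
  have hb : a / (1 + a) ≤ sinh (a / (1 + a)) := self_le_sinh_iff.2 (by positivity)
  have hsq : a ^ 2 ≤ sinh a ^ 2 := pow_le_pow_left₀ ha₀ (self_le_sinh_iff.2 ha₀) 2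
  have hcubic : a + a ^ 3 / 5 - a / (1 + a) ≤ a ^ 2 := by
    rw [← sub_nonneg]
    have : a ^ 2 - (a + a ^ 3 / 5 - a / (1 + a)) = a ^ 3 * (4 - a) / (5 * (1 + a)) := by
      field_simp; ring
    rw [this]
    exact div_nonneg (mul_nonneg (pow_nonneg ha₀ 3) (by linarith)) (by positivity)
  linarith [sinh_le_add_cube_div_five ha₀ ha]

end Real

theorem stmt_12 (n : ℕ) :
    2 * Real.cosh ((2*(n:ℝ)+5)/(2*((n:ℝ)+2)*((n:ℝ)+3))) *
        Real.sinh (1/(2*((n:ℝ)+2)*((n:ℝ)+3))) ≤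
      (Real.sinh (1/((n:ℝ)+2)))^2 := by
  have hn : (0 : ℝ) ≤ n := n.cast_nonneg
  have hsum : (2*(n:ℝ)+5)/(2*((n:ℝ)+2)*((n:ℝ)+3)) + 1/(2*((n:ℝ)+2)*((n:ℝ)+3)) = 1/((n:ℝ)+2) := by
    field_simp; ring
  have hdiff : (2*(n:ℝ)+5)/(2*((n:ℝ)+2)*((n:ℝ)+3)) - 1/(2*((n:ℝ)+2)*((n:ℝ)+3)) =
      1/((n:ℝ)+2) / (1 + 1/((n:ℝ)+2)) := by
    field_simp; ring
  rw [two_mul_cosh_mul_sinh, hsum, hdiff]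
  apply sinh_sub_sinh_div_one_add_le_sinh_sq (by positivity)
  rw [div_le_div_iff₀ (by positivity) (by norm_num)]
  linarith
end

section
/- Let a_n = sinh(1/(n+2)) for n ≥ 0. Then for every n, a_n(1 - a_n) ≤ a_{n+1} ≤ a_n/(1 + a_n). -/
/-!
Put `x = 1/(n+2)`; then `1/(n+3) = x/(1+x)`, so both inequalities compare `sinh x` with
`sinh (x/(1+x))` for `x ∈ (0, 1/2]`. On `[0, 1]` the sinh series gives
`x + x³/6 ≤ sinh x ≤ x + x³/6 + x⁵/100`, and with these bounds each inequality reduces to a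
rational inequality in `x` whose numerator is an explicitly nonnegative polynomial.
-/

open Real Finset Nat

lemma add_pow_three_div_six_le_sinh {x : ℝ} (hx : 0 ≤ x) : x + x ^ 3 / 6 ≤ sinh x := by
  have h := sum_le_hasSum (range 2) (fun n _ ↦ by positivity) (Real.hasSum_sinh x)
  norm_num [sum_range_succ, Nat.factorial] at h
  exact h

/-- Termwise, `x ^ (2n+5) ≤ x ^ 5` in the tail of the sinh series. -/
lemma sinh_sub_le_pow_five_mul {x : ℝ} (hx0 : 0 ≤ x) (hx1 : x ≤ 1) :
    sinh x - (x + x ^ 3 / 6) ≤ x ^ 5 * (sinh 1 - (1 + 1 / 6)) := by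
  have tail (r : ℝ) : HasSum (fun n ↦ r ^ (2 * (n + 2) + 1) / (2 * (n + 2) + 1)!)
      (sinh r - (r + r ^ 3 / 6)) := by
    have head : ∑ n ∈ range 2, r ^ (2 * n + 1) / ((2 * n + 1)! : ℝ) = r + r ^ 3 / 6 := by
      norm_num [sum_range_succ, Nat.factorial]
    rw [← head]
    exact (hasSum_nat_add_iff' 2).mpr (Real.hasSum_sinh r)
  have tail_one := (tail 1).mul_left (x ^ 5)
  simp only [one_pow, mul_one_div] at tail_one
  exact hasSum_le (fun n ↦ div_le_div_of_nonneg_right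
    (pow_le_pow_of_le_one hx0 hx1 (by omega)) (by positivity)) (tail x) tail_one

lemma sinh_one_sub_lt : sinh 1 - (1 + 1 / 6) < 1 / 100 := by
  have hinv : (2.7182818286 : ℝ)⁻¹ < (exp 1)⁻¹ := inv_strictAnti₀ (exp_pos 1) exp_one_lt_d9
  rw [sinh_eq, exp_neg]
  norm_num at hinv ⊢
  linarith [exp_one_lt_d9]

lemma sinh_le_add_pow_five {x : ℝ} (hx0 : 0 ≤ x) (hx1 : x ≤ 1) :
    sinh x ≤ x + x ^ 3 / 6 + x ^ 5 / 100 := by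
  have h := mul_le_mul_of_nonneg_left sinh_one_sub_lt.le (pow_nonneg hx0 5)
  linarith [sinh_sub_le_pow_five_mul hx0 hx1]

lemma sinh_mul_one_sub_sinh_le {x : ℝ} (hx0 : 0 ≤ x) (hx1 : x ≤ 1) :
    sinh x * (1 - sinh x) ≤ sinh (x / (1 + x)) := by
  have hs_lo : x ≤ sinh x := self_le_sinh_iff.mpr hx0
  have hs_hi := sinh_le_add_pow_five hx0 hx1
  have ht_lo : x / (1 + x) ≤ sinh (x / (1 + x)) := self_le_sinh_iff.mpr (by positivity)
  have key : x + x ^ 3 / 6 + x ^ 5 / 100 - x ^ 2 ≤ x / (1 + x) := by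
    have h : x / (1 + x) - (x + x ^ 3 / 6 + x ^ 5 / 100 - x ^ 2)
        = x ^ 3 * (5 / 6 - x / 6 - x ^ 2 / 100 - x ^ 3 / 100) / (1 + x) := by
      field_simp
      ring
    have hpos : 0 ≤ 5 / 6 - x / 6 - x ^ 2 / 100 - x ^ 3 / 100 := by
      nlinarith [pow_le_one₀ hx0 hx1 (n := 2), pow_le_one₀ hx0 hx1 (n := 3)]
    have : 0 ≤ x / (1 + x) - (x + x ^ 3 / 6 + x ^ 5 / 100 - x ^ 2) := by
      rw [h]; positivity
    linarith
  nlinarith [mul_le_mul hs_lo hs_lo hx0 (hx0.trans hs_lo)]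

lemma sinh_div_one_add_le {x : ℝ} (hx0 : 0 ≤ x) (hx1 : x ≤ 1) :
    sinh (x / (1 + x)) ≤ sinh x / (1 + sinh x) := by
  set y := x / (1 + x) with hy
  have hy0 : 0 ≤ y := by positivity
  have hy1 : y ≤ 1 := (div_le_one (by linarith)).mpr (by linarith)
  have hs_lo := add_pow_three_div_six_le_sinh hx0
  have ht_hi := sinh_le_add_pow_five hy0 hy1
  have key : (y + y ^ 3 / 6 + y ^ 5 / 100) * (1 + (x + x ^ 3 / 6)) ≤ x + x ^ 3 / 6 := by
    have h : x + x ^ 3 / 6 - (y + y ^ 3 / 6 + y ^ 5 / 100) * (1 + (x + x ^ 3 / 6))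
        = x ^ 4 * (1 / 6 + 49 / 100 * x + 104 / 225 * x ^ 2 + x ^ 3 / 9 - 53 / 1800 * x ^ 4)
          / (1 + x) ^ 5 := by
      rw [hy]
      field_simp
      ring
    have hpos : 0 ≤ 1 / 6 + 49 / 100 * x + 104 / 225 * x ^ 2 + x ^ 3 / 9 - 53 / 1800 * x ^ 4 := by
      nlinarith [pow_le_one₀ hx0 hx1 (n := 4), pow_nonneg hx0 2, pow_nonneg hx0 3]
    have : 0 ≤ x + x ^ 3 / 6 - (y + y ^ 3 / 6 + y ^ 5 / 100) * (1 + (x + x ^ 3 / 6)) := by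
      rw [h]; positivity
    linarith
  -- `u ↦ u / (1 + u)` is increasing, so the lower bound on `sinh x` is the one that matters.
  have hL0 : 0 ≤ x + x ^ 3 / 6 := by positivity
  have hU1 : y + y ^ 3 / 6 + y ^ 5 / 100 ≤ 1 := by nlinarith
  rw [le_div_iff₀ (by linarith)]
  nlinarith [mul_le_mul_of_nonneg_right ht_hi (by linarith : 0 ≤ 1 + sinh x),
    mul_nonneg (sub_nonneg.mpr hU1) (sub_nonneg.mpr hs_lo)]

theorem stmt_13 (a : ℕ → ℝ) (ha : ∀ n, a n = Real.sinh (1/((n:ℝ)+2))) :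
    ∀ n : ℕ, a n * (1 - a n) ≤ a (n+1) ∧ a (n+1) ≤ a n / (1 + a n) := by
  intro n
  set x : ℝ := 1 / ((n : ℝ) + 2) with hx
  have hx0 : 0 ≤ x := by positivity
  have hx1 : x ≤ 1 := by
    rw [div_le_one (by positivity)]
    linarith [(n.cast_nonneg : (0 : ℝ) ≤ n)]
  have hsucc : a (n + 1) = sinh (x / (1 + x)) := by
    rw [ha, hx]
    push_cast
    field_simp
    congr 1
    ring
  rw [ha n, hsucc]
  exact ⟨sinh_mul_one_sub_sinh_le hx0 hx1, sinh_div_one_add_le hx0 hx1⟩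
end

section
/- (tan(1) - 1)^2 + Σ_{n=1}^{∞} (1/(n+1) + (1/3)(1/(n+1))^3)^2 > 1.01. -/
/-!
Both summands are bounded below numerically. Squaring out, the series dominates
`∑ (a² + (2/3) a⁴)` with `a = 1/(n+2)`, which is `ζ(2) - 1 + (2/3)(ζ(4) - 1) ≈ 0.69981`
by the Euler values `ζ(2) = π²/6` and `ζ(4) = π⁴/90`. The degree-7 Taylor polynomial of
`exp` at `i` gives `sin 1` and `cos 1` to within `1/35840`, hence `tan 1 > 1.55733` and
`(tan 1 - 1)² > 0.31061`.
-/

open Finset Real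

lemma Complex.norm_exp_I_sub_taylor_le :
    ‖Complex.exp Complex.I - (389 / 720 + 4241 / 5040 * Complex.I)‖ ≤ 1 / 35840 := by
  have hpoly :
      ∑ m ∈ range 8, Complex.I ^ m / m.factorial = 389 / 720 + 4241 / 5040 * Complex.I := by
    norm_num [sum_range_succ, Complex.ext_iff, pow_succ, Nat.factorial]
  have h := Complex.exp_bound (x := Complex.I) (by simp) (n := 8) (by norm_num)
  rw [hpoly] at h
  exact h.trans (by norm_num [Nat.factorial])

lemma Real.abs_cos_one_sub_le : |cos 1 - 389 / 720| ≤ 1 / 35840 := by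
  have hre : (Complex.exp Complex.I).re = cos 1 := by simpa using Complex.exp_ofReal_mul_I_re 1
  simpa [hre] using (Complex.abs_re_le_norm _).trans Complex.norm_exp_I_sub_taylor_le

lemma Real.abs_sin_one_sub_le : |sin 1 - 4241 / 5040| ≤ 1 / 35840 := by
  have him : (Complex.exp Complex.I).im = sin 1 := by simpa using Complex.exp_ofReal_mul_I_im 1
  simpa [him] using (Complex.abs_im_le_norm _).trans Complex.norm_exp_I_sub_taylor_le

lemma Real.lt_tan_one : 1.55733 < tan 1 := by
  have hcos := (abs_le.mp abs_cos_one_sub_le).2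
  have hsin := (abs_le.mp abs_sin_one_sub_le).1
  rw [tan_eq_sin_div_cos, lt_div_iff₀ cos_one_pos]
  linarith

lemma hasSum_one_div_nat_add_two_pow {p : ℕ} (hp : p ≠ 0) {s : ℝ}
    (h : HasSum (fun n : ℕ => 1 / (n : ℝ) ^ p) s) :
    HasSum (fun n : ℕ => 1 / ((n : ℝ) + 2) ^ p) (s - 1) := by
  simpa [sum_range_succ, hp] using (hasSum_nat_add_iff' 2).mpr h

lemma summable_one_div_nat_add_two_pow {p : ℕ} (hp : 1 < p) :
    Summable (fun n : ℕ => 1 / ((n : ℝ) + 2) ^ p) := by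
  simpa using (summable_nat_add_iff 2).mpr (summable_one_div_nat_pow.mpr hp)

lemma tsum_sq_add_cube_div_three_ge :
    π ^ 2 / 6 - 1 + 2 / 3 * (π ^ 4 / 90 - 1) ≤
      ∑' n : ℕ, (1 / ((n : ℝ) + 2) + 1 / 3 * (1 / ((n : ℝ) + 2)) ^ 3) ^ 2 := by
  have hlower := (hasSum_one_div_nat_add_two_pow two_ne_zero hasSum_zeta_two).add
    ((hasSum_one_div_nat_add_two_pow four_ne_zero hasSum_zeta_four).mul_left (2 / 3))
  have hexpand : ∀ n : ℕ, (1 / ((n : ℝ) + 2) + 1 / 3 * (1 / ((n : ℝ) + 2)) ^ 3) ^ 2 =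
      1 / ((n : ℝ) + 2) ^ 2 + 2 / 3 * (1 / ((n : ℝ) + 2) ^ 4) +
        1 / 9 * (1 / ((n : ℝ) + 2) ^ 6) :=
    fun n => by simp only [← one_div_pow]; ring
  have hsummable := hlower.summable.add
    ((summable_one_div_nat_add_two_pow (p := 6) (by norm_num)).mul_left (1 / 9))
  refine hasSum_le (fun n => ?_) hlower ((funext hexpand).symm ▸ hsummable.hasSum)
  rw [hexpand]
  exact le_add_of_nonneg_right (by positivity)

theorem stmt_14 :
    (Real.tan 1 - 1)^2 +
      ∑' n : ℕ, (1/((n:ℝ)+1+1) + (1/3)*(1/((n:ℝ)+1+1))^3)^2 > 1.01 := by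
  have hsum := tsum_sq_add_cube_div_three_ge
  simp only [add_assoc, one_add_one_eq_two]
  have htan : 0.310616 < (tan 1 - 1) ^ 2 := by nlinarith [lt_tan_one]
  have hπ2 : 9.8696 < π ^ 2 := by nlinarith [pi_gt_d6]
  have hπ4 : 97.409 < π ^ 4 := by nlinarith
  linarith
end

section
/- (tan(1) - 1)^2 + (ζ(2) - 1) + (2/3)(ζ(4) - 1) + (1/9)(ζ(6) - 1) > 1.01, where ζ is the Riemann zeta function at positive even integers, i.e., ζ(2) = π²/6, ζ(4) = π⁴/90, ζ(6) = π⁶/945. -/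
/-!
Everything reduces to a lower bound `tan 1 > 1.5553`, since the π-terms are bounded below
from `π > 3.141592` (the margin is about 10⁻⁴, so fewer digits of π do not suffice).
The bound on `tan 1` comes from `1 + tan² x = 1 / cos² x` together with
`cos 1 = 1 - 2 sin² (1/2) ≤ 1 - 2 (23/48)²`, where `sin (1/2) ≥ 1/2 - (1/2)³/6 = 23/48`.
-/

open Real

namespace Real

theorem cos_two_mul_le_one_sub_two_mul_sq {x : ℝ} (h₀ : 0 ≤ x) (h₆ : x ^ 2 ≤ 6) :
    cos (2 * x) ≤ 1 - 2 * (x - x ^ 3 / 6) ^ 2 := by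
  have hcube : 0 ≤ x - x ^ 3 / 6 := by nlinarith
  rw [cos_two_mul_eq_one_sub]
  gcongr
  exact sin_ge_sub_cube h₀

theorem one_div_sq_sub_one_le_tan_sq {x c : ℝ} (hcos : 0 < cos x) (h : cos x ≤ c) :
    1 / c ^ 2 - 1 ≤ tan x ^ 2 := by
  have hinv : 1 + tan x ^ 2 = 1 / cos x ^ 2 := by
    rw [← inv_one_add_tan_sq hcos.ne', one_div, inv_inv]
  have : 1 / c ^ 2 ≤ 1 / cos x ^ 2 := by gcongr
  linarith

theorem tan_one_gt : 1.5553 < tan 1 := by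
  have hcos : cos 1 ≤ 623 / 1152 := by
    have h := cos_two_mul_le_one_sub_two_mul_sq (x := 1 / 2) (by norm_num) (by norm_num)
    norm_num at h
    linarith
  have hsq := one_div_sq_sub_one_le_tan_sq cos_one_pos hcos
  have hpos : 0 < tan 1 :=
    tan_pos_of_pos_of_lt_pi_div_two one_pos (by linarith [pi_gt_three])
  nlinarith

theorem lt_pi_pow_two_add_pi_pow_four_add_pi_pow_six :
    0.7017 < (π ^ 2 / 6 - 1) + (2 / 3) * (π ^ 4 / 90 - 1) + (1 / 9) * (π ^ 6 / 945 - 1) := by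
  have hsq : 9.8696 < π ^ 2 := by nlinarith [pi_gt_d6]
  have h4 : π ^ 4 = (π ^ 2) ^ 2 := by ring
  have h6 : π ^ 6 = (π ^ 2) ^ 3 := by ring
  rw [h4, h6]
  nlinarith [pow_lt_pow_left₀ hsq (by norm_num) two_ne_zero,
    pow_lt_pow_left₀ hsq (by norm_num) three_ne_zero]

end Real

theorem stmt_15 :
    (Real.tan 1 - 1)^2 + (Real.pi^2/6 - 1) + (2/3)*(Real.pi^4/90 - 1) +
      (1/9)*(Real.pi^6/945 - 1) > 1.01 := by
  have htan : (0.5553 : ℝ) ^ 2 < (tan 1 - 1) ^ 2 :=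
    pow_lt_pow_left₀ (by linarith [tan_one_gt]) (by norm_num) two_ne_zero
  linarith [lt_pi_pow_two_add_pi_pow_four_add_pi_pow_six]
end

section
/- The sequence (n+1)·tan(1/(n+1)) is strictly decreasing in n, while the sequences (n+1)·sin(1/(n+1)), (n+1)·ln(1+1/(n+1)), and (n+1)·arctan(1/(n+1)) are each strictly increasing in n with limit 1. -/
/-!
With `x = 1 / (n + 1)`, each sequence is `f x / x`, the slope of the secant of `f` through the
origin (`f 0 = 0`). As `n` grows, `x` decreases to `0`, so the slope increases for `f` strictly
concave (`sin`, `log (1 + ·)`, `arctan`) and decreases for `f` strictly convex (`tan`), and it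
tends to `f' 0 = 1`.
-/

open Real Filter Set Topology

theorem StrictConcaveOn.strictMono_succ_mul_one_div {s : Set ℝ} {f : ℝ → ℝ}
    (hf : StrictConcaveOn ℝ s f) (h0 : 0 ∈ s) (h1 : 1 ∈ s) (hf0 : f 0 = 0) :
    StrictMono fun n : ℕ => ((n : ℝ) + 1) * f (1 / ((n : ℝ) + 1)) := by
  have hmem (k : ℕ) : 1 / ((k : ℝ) + 1) ∈ s :=
    hf.1.ordConnected.out h0 h1 ⟨by positivity, div_le_one_of_le₀ (by simp) (by positivity)⟩
  intro m n hmn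
  have hlt : 1 / ((n : ℝ) + 1) < 1 / ((m : ℝ) + 1) := by gcongr
  have := hf.secant_strict_mono h0 (hmem n) (hmem m) (by positivity) (by positivity) hlt
  simpa [hf0, mul_comm] using this

theorem StrictConvexOn.strictAnti_succ_mul_one_div {s : Set ℝ} {f : ℝ → ℝ}
    (hf : StrictConvexOn ℝ s f) (h0 : 0 ∈ s) (h1 : 1 ∈ s) (hf0 : f 0 = 0) :
    StrictAnti fun n : ℕ => ((n : ℝ) + 1) * f (1 / ((n : ℝ) + 1)) := by
  have := hf.neg.strictMono_succ_mul_one_div h0 h1 (by simp [hf0])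
  simpa using this.neg

theorem tendsto_succ_mul_one_div_of_hasDerivAt {f : ℝ → ℝ} {f' : ℝ} (hf0 : f 0 = 0)
    (hf : HasDerivAt f f' 0) :
    Tendsto (fun n : ℕ => ((n : ℝ) + 1) * f (1 / ((n : ℝ) + 1))) atTop (𝓝 f') := by
  have hx : Tendsto (fun n : ℕ => 1 / ((n : ℝ) + 1)) atTop (𝓝[≠] 0) :=
    tendsto_nhdsWithin_of_tendsto_nhds_of_eventually_within _
      tendsto_one_div_add_atTop_nhds_zero_nat (.of_forall fun _ => Nat.one_div_pos_of_nat.ne')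
  refine ((hasDerivAt_iff_tendsto_slope.mp hf).comp hx).congr fun n => ?_
  simp [slope_def_field, hf0, mul_comm]

theorem strictConvexOn_tan : StrictConvexOn ℝ (Ico 0 (π / 2)) tan := by
  refine StrictMonoOn.strictConvexOn_of_deriv (convex_Ico _ _)
    (continuousOn_tan_Ioo.mono fun x hx => ⟨by linarith [hx.1, pi_pos], hx.2⟩) ?_
  rw [interior_Ico]
  intro x hx y hy hxy
  have hcos_pos : 0 < cos y := cos_pos_of_mem_Ioo ⟨by linarith [hy.1, pi_pos], hy.2⟩
  have hcos_lt : cos y < cos x := strictAntiOn_cos ⟨hx.1.le, by linarith [hx.2, pi_pos]⟩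
    ⟨hy.1.le, by linarith [hy.2, pi_pos]⟩ hxy
  simp only [deriv_tan]
  gcongr

theorem strictConcaveOn_arctan : StrictConcaveOn ℝ (Ici 0) arctan := by
  refine StrictAntiOn.strictConcaveOn_of_deriv (convex_Ici _) continuous_arctan.continuousOn ?_
  rw [interior_Ici, Real.deriv_arctan]
  intro x (hx : 0 < x) y _ hxy
  dsimp only
  gcongr

theorem strictConcaveOn_log_one_add : StrictConcaveOn ℝ (Ioi (-1)) fun x => log (1 + x) := by
  have h := strictConcaveOn_log_Ioi.translate_right (1 : ℝ)
  have hs : (fun z : ℝ => 1 + z) ⁻¹' Ioi 0 = Ioi (-1) := by ext; simp [neg_lt_iff_pos_add']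
  rwa [hs] at h

theorem stmt_17 :
    (StrictAnti fun n : ℕ => ((n:ℝ)+1) * Real.tan (1/((n:ℝ)+1))) ∧
    (StrictMono fun n : ℕ => ((n:ℝ)+1) * Real.sin (1/((n:ℝ)+1))) ∧
    (Filter.Tendsto (fun n : ℕ => ((n:ℝ)+1) * Real.sin (1/((n:ℝ)+1)))
      Filter.atTop (nhds 1)) ∧
    (StrictMono fun n : ℕ => ((n:ℝ)+1) * Real.log (1 + 1/((n:ℝ)+1))) ∧
    (Filter.Tendsto (fun n : ℕ => ((n:ℝ)+1) * Real.log (1 + 1/((n:ℝ)+1)))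
      Filter.atTop (nhds 1)) ∧
    (StrictMono fun n : ℕ => ((n:ℝ)+1) * Real.arctan (1/((n:ℝ)+1))) ∧
    (Filter.Tendsto (fun n : ℕ => ((n:ℝ)+1) * Real.arctan (1/((n:ℝ)+1)))
      Filter.atTop (nhds 1)) := by
  have hlog : HasDerivAt (fun x => log (1 + x)) 1 0 := by
    simpa using ((hasDerivAt_id (0 : ℝ)).const_add 1).log (by norm_num)
  refine ⟨strictConvexOn_tan.strictAnti_succ_mul_one_div ⟨le_rfl, pi_div_two_pos⟩
      ⟨zero_le_one, by linarith [pi_gt_three]⟩ tan_zero,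
    strictConcaveOn_sin_Icc.strictMono_succ_mul_one_div ⟨le_rfl, pi_pos.le⟩
      ⟨zero_le_one, by linarith [pi_gt_three]⟩ sin_zero,
    tendsto_succ_mul_one_div_of_hasDerivAt sin_zero (by simpa using hasDerivAt_sin 0),
    strictConcaveOn_log_one_add.strictMono_succ_mul_one_div (by norm_num) (by norm_num) (by simp),
    tendsto_succ_mul_one_div_of_hasDerivAt (by simp) hlog,
    strictConcaveOn_arctan.strictMono_succ_mul_one_div self_mem_Ici (mem_Ici.2 zero_le_one)
      arctan_zero,
    tendsto_succ_mul_one_div_of_hasDerivAt arctan_zero (by simpa using hasDerivAt_arctan 0)⟩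
end
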